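/- The parallel composition operation on TTSBs is associative: for any pairwise compatible TTSBs T₁, T₂ and T₃, the composition T₁‖T₂ is compatible with T₃, T₁ is compatible with T₂‖T₃, and (T₁‖T₂)‖T₃ = T₁‖(T₂‖T₃) (same external and internal variable sets, same state set, same initial state, and same committed and uncommitted transition relations). -/

import Mathlib

open Classical

noncomputable section

namespace TTSBpaper

/-! ### Partial functions / valuations -/

/-- The domain of a partial function. -/
def dom {α β : Type*} (f : α → Option β) : Set α := {x | f x ≠ none}

/-- The override operator. -/
def override {α β : Type*} (f g : α → Option β) : α → Option β :=
  fun x => if x ∈ dom f then f x else g x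

/-- Restriction of a partial function to a set. -/
def restrictV {α β : Type*} (f : α → Option β) (X : Set α) : α → Option β :=
  fun x => if x ∈ X then f x else none

/-- Compatibility of partial functions. -/
def compatV {α β : Type*} (f g : α → Option β) : Prop :=
  ∀ x ∈ dom f ∩ dom g, f x = g x

/-- Update of f according to g. -/
def updV {α β : Type*} (f g : α → Option β) : α → Option β :=
  restrictV (override g f) (dom f)

/-- A property P (a set of valuations over V) does not depend on the variables in W. -/
def indep {α β : Type*} (V W : Set α) (P : Set (α → Option β)) : Prop :=
  ∀ v u, dom v = V → dom u = W → (v ∈ P ↔ updV v u ∈ P)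

variable {Var Data BCh CCh : Type}

/-- Values: nonnegative reals for clocks, plus arbitrary data. -/
abbrev Value (Data : Type) : Type := NNReal ⊕ Data

/-- Valuations over a universal set of variables, as partial functions. -/
abbrev Valn (Var Data : Type) : Type := Var → Option (Value Data)

/-- Singleton valuation. -/
def single (x : Var) (v : Value Data) : Valn Var Data :=
  fun y => if y = x then some v else none

/-- Time shift v ⊕ d : all clocks (variables in X) advance by d. -/
def oplus (X : Set Var) (v : Valn Var Data) (d : NNReal) : Valn Var Data :=
  fun y => if y ∈ X then (v y).map (Sum.map (fun r => r + d) id) else v y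

/-- A property is left-closed w.r.t. time passage. -/
def leftClosed (X : Set Var) (P : Set (Valn Var Data)) : Prop :=
  ∀ v d, oplus X v d ∈ P → v ∈ P

/-! ### Actions -/

/-- Actions: broadcast output/input, binary output/input, internal, and time passage. -/
inductive Act (BCh CCh : Type) : Type where
  | bsend : BCh → Act BCh CCh
  | brecv : BCh → Act BCh CCh
  | send : CCh → Act BCh CCh
  | recv : CCh → Act BCh CCh
  | tau : Act BCh CCh
  | delay : NNReal → Act BCh CCh

/-- Binary actions. -/
def Act.isBinary : Act BCh CCh → Prop
  | .send _ => True
  | .recv _ => True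
  | _ => False

/-- Binary or broadcast actions. -/
def Act.isSync : Act BCh CCh → Prop
  | .send _ => True
  | .recv _ => True
  | .bsend _ => True
  | .brecv _ => True
  | _ => False

/-- Actions removed by restriction to channel sets Cb, Cc. -/
def Act.removedBy (Cb : Set BCh) (Cc : Set CCh) : Act BCh CCh → Prop
  | .brecv d => d ∈ Cb
  | .send c => c ∈ Cc
  | .recv c => c ∈ Cc
  | _ => False

/-- Actions whose label is kept unchanged by restriction to channel sets Cb, Cc. -/
def Act.keptBy (Cb : Set BCh) (Cc : Set CCh) : Act BCh CCh → Prop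
  | .bsend d => d ∉ Cb
  | .brecv d => d ∉ Cb
  | .send c => c ∉ Cc
  | .recv c => c ∉ Cc
  | _ => True

/-! ### Timed transition systems with broadcast actions -/

/-- The data of a TTSB: external/internal variables, states, initial state and
committed (`true`) / uncommitted (`false`) transition relations. -/
structure PreTTSB (Var Data BCh CCh : Type) : Type where
  E : Set Var
  H : Set Var
  S : Set (Valn Var Data)
  init : Valn Var Data
  Tr : Bool → Valn Var Data → Act BCh CCh → Valn Var Data → Prop

/-- The variables of a TTSB. -/
def PreTTSB.V (T : PreTTSB Var Data BCh CCh) : Set Var := T.E ∪ T.H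

/-- A state is committed iff some committed transition starts in it. -/
def PreTTSB.Comm (T : PreTTSB Var Data BCh CCh) (s : Valn Var Data) : Prop :=
  ∃ a t, T.Tr true s a t

/-- `T` is a timed transition system with broadcast actions (with clock set `X`):
well-formedness plus Axioms I–VI of the paper. -/
structure IsTTSB (X : Set Var) (T : PreTTSB Var Data BCh CCh) : Prop where
  disjEH : Disjoint T.E T.H
  statesDom : ∀ s ∈ T.S, dom s = T.V
  initMem : T.init ∈ T.S
  trMem : ∀ {b s a t}, T.Tr b s a t → s ∈ T.S ∧ t ∈ T.S
  trDisj : ∀ s a t, ¬ (T.Tr true s a t ∧ T.Tr false s a t)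
  axI : ∀ {s a t b a' t'}, T.Tr true s a t → T.Tr b s a' t' →
      a'.isSync ∨ (a' = Act.tau ∧ b = true)
  axII : ∀ {s} (u : Valn Var Data), s ∈ T.S → dom u = T.E → updV s u ∈ T.S
  axIIIc : ∀ {b s t} (u : Valn Var Data) (c : CCh), dom u = T.E →
      T.Tr b s (Act.recv c) t → ∃ t', T.Tr b (updV s u) (Act.recv c) t'
  axIIIb : ∀ {b s t} (u : Valn Var Data) (d : BCh), dom u = T.E →
      T.Tr b s (Act.brecv d) t → ∃ t', T.Tr b (updV s u) (Act.brecv d) t'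
  axIV : ∀ {s d t}, T.Tr false s (Act.delay d) t → t = oplus X s d
  axV : ∀ (d : BCh), ∀ s ∈ T.S, ∃ b t, T.Tr b s (Act.brecv d) t
  axVI : ∀ {b s t} (d : BCh), T.Tr b s (Act.brecv d) t →
      restrictV s T.E = restrictV t T.E

/-- Compatibility of two TTSBs. -/
def Compatible (T1 T2 : PreTTSB Var Data BCh CCh) : Prop :=
  T1.H ∩ T2.V = ∅ ∧ T2.H ∩ T1.V = ∅ ∧ compatV T1.init T2.init

/-- Comparability of two TTSBs. -/
def Comparable (T1 T2 : PreTTSB Var Data BCh CCh) : Prop := T1.E = T2.E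

/-- The transition relations of the parallel composition of two TTSBs
(rules EXT, TAU, SYNC, TIME, SND, RCV of the paper, in both directions). -/
inductive ParTr (T1 T2 : PreTTSB Var Data BCh CCh) :
    Bool → Valn Var Data → Act BCh CCh → Valn Var Data → Prop where
  | ext₁ {r s r' : Valn Var Data} {a : Act BCh CCh} {b : Bool}
      (hr : r ∈ T1.S) (hs : s ∈ T2.S) (hc : compatV r s)
      (ha : a.isBinary) (ht : T1.Tr b r a r') :
      ParTr T1 T2 b (override r s) a (override r' s)
  | ext₂ {r s s' : Valn Var Data} {a : Act BCh CCh} {b : Bool}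
      (hr : r ∈ T1.S) (hs : s ∈ T2.S) (hc : compatV r s)
      (ha : a.isBinary) (ht : T2.Tr b s a s') :
      ParTr T1 T2 b (override r s) a (override s' r)
  | tau₁ {r s r' : Valn Var Data} {b : Bool}
      (hr : r ∈ T1.S) (hs : s ∈ T2.S) (hc : compatV r s)
      (ht : T1.Tr b r Act.tau r') (hcm : T2.Comm s → b = true) :
      ParTr T1 T2 b (override r s) Act.tau (override r' s)
  | tau₂ {r s s' : Valn Var Data} {b : Bool}
      (hr : r ∈ T1.S) (hs : s ∈ T2.S) (hc : compatV r s)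
      (ht : T2.Tr b s Act.tau s') (hcm : T1.Comm r → b = true) :
      ParTr T1 T2 b (override r s) Act.tau (override s' r)
  | sync₁ {r s r' s' : Valn Var Data} {c : CCh} {b b' : Bool}
      (hr : r ∈ T1.S) (hs : s ∈ T2.S) (hc : compatV r s)
      (ht1 : T1.Tr b r (Act.send c) r') (ht2 : T2.Tr b' (updV s r') (Act.recv c) s')
      (hcm : (T1.Comm r ∨ T2.Comm s) → (b || b') = true) :
      ParTr T1 T2 (b || b') (override r s) Act.tau (override s' r')
  | sync₂ {r s r' s' : Valn Var Data} {c : CCh} {b b' : Bool}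
      (hr : r ∈ T1.S) (hs : s ∈ T2.S) (hc : compatV r s)
      (ht1 : T2.Tr b s (Act.send c) s') (ht2 : T1.Tr b' (updV r s') (Act.recv c) r')
      (hcm : (T2.Comm s ∨ T1.Comm r) → (b || b') = true) :
      ParTr T1 T2 (b || b') (override r s) Act.tau (override r' s')
  | time₁ {r s r' s' : Valn Var Data} {d : NNReal}
      (hr : r ∈ T1.S) (hs : s ∈ T2.S) (hc : compatV r s)
      (ht1 : T1.Tr false r (Act.delay d) r') (ht2 : T2.Tr false s (Act.delay d) s') :
      ParTr T1 T2 false (override r s) (Act.delay d) (override r' s')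
  | time₂ {r s r' s' : Valn Var Data} {d : NNReal}
      (hr : r ∈ T1.S) (hs : s ∈ T2.S) (hc : compatV r s)
      (ht1 : T2.Tr false s (Act.delay d) s') (ht2 : T1.Tr false r (Act.delay d) r') :
      ParTr T1 T2 false (override r s) (Act.delay d) (override s' r')
  | snd₁ {r s r' s' : Valn Var Data} {δ : BCh} {b b' : Bool}
      (hr : r ∈ T1.S) (hs : s ∈ T2.S) (hc : compatV r s)
      (ht1 : T1.Tr b r (Act.bsend δ) r') (ht2 : T2.Tr b' (updV s r') (Act.brecv δ) s') :
      ParTr T1 T2 (b || b') (override r s) (Act.bsend δ) (override r' s')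
  | snd₂ {r s r' s' : Valn Var Data} {δ : BCh} {b b' : Bool}
      (hr : r ∈ T1.S) (hs : s ∈ T2.S) (hc : compatV r s)
      (ht1 : T2.Tr b s (Act.bsend δ) s') (ht2 : T1.Tr b' (updV r s') (Act.brecv δ) r') :
      ParTr T1 T2 (b || b') (override r s) (Act.bsend δ) (override s' r')
  | rcv₁ {r s r' s' : Valn Var Data} {δ : BCh} {b b' : Bool}
      (hr : r ∈ T1.S) (hs : s ∈ T2.S) (hc : compatV r s)
      (ht1 : T1.Tr b r (Act.brecv δ) r') (ht2 : T2.Tr b' s (Act.brecv δ) s') :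
      ParTr T1 T2 (b || b') (override r s) (Act.brecv δ) (override r' s')
  | rcv₂ {r s r' s' : Valn Var Data} {δ : BCh} {b b' : Bool}
      (hr : r ∈ T1.S) (hs : s ∈ T2.S) (hc : compatV r s)
      (ht1 : T2.Tr b s (Act.brecv δ) s') (ht2 : T1.Tr b' r (Act.brecv δ) r') :
      ParTr T1 T2 (b || b') (override r s) (Act.brecv δ) (override s' r')

/-- Parallel composition of TTSBs. -/
def par (T1 T2 : PreTTSB Var Data BCh CCh) : PreTTSB Var Data BCh CCh where
  E := T1.E ∪ T2.E
  H := T1.H ∪ T2.H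
  S := {v | ∃ r ∈ T1.S, ∃ s ∈ T2.S, compatV r s ∧ v = override r s}
  init := override T1.init T2.init
  Tr := ParTr T1 T2

/-- n-ary (left-associated) parallel composition. -/
def parAll (T : PreTTSB Var Data BCh CCh) (Ts : List (PreTTSB Var Data BCh CCh)) :
    PreTTSB Var Data BCh CCh :=
  Ts.foldl par T

/-- The restriction operator on TTSBs: channels in Cb/Cc and external variables in Ce
are internalized, following Definition 10 of the paper. -/
def restr (T : PreTTSB Var Data BCh CCh) (Cb : Set BCh) (Cc : Set CCh) (Ce : Set Var) :
    PreTTSB Var Data BCh CCh where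
  E := T.E \ Ce
  H := T.H ∪ (T.E ∩ Ce)
  S := T.S
  init := T.init
  Tr := fun b s a t =>
    (T.Tr b s a t ∧ Act.keptBy Cb Cc a) ∨
    (a = Act.tau ∧ ∃ δ ∈ Cb, T.Tr b s (Act.bsend δ) t ∧ (T.Comm s → b = true))

/-- Broadcast channels enabled in the transitions of T. -/
def enabledB (T : PreTTSB Var Data BCh CCh) : Set BCh :=
  {δ | ∃ b s t, T.Tr b s (Act.bsend δ) t ∨ T.Tr b s (Act.brecv δ) t}

/-- Binary channels enabled in the transitions of T. -/
def enabledC (T : PreTTSB Var Data BCh CCh) : Set CCh :=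
  {c | ∃ b s t, T.Tr b s (Act.send c) t ∨ T.Tr b s (Act.recv c) t}

/-! ### Timed step simulation -/

/-- R is a timed step simulation from T1 to T2 (Definition 11 of the paper). -/
structure IsTimedStepSim (T1 T2 : PreTTSB Var Data BCh CCh)
    (R : Valn Var Data → Valn Var Data → Prop) : Prop where
  mem : ∀ {r s}, R r s → r ∈ T1.S ∧ s ∈ T2.S
  initR : R T1.init T2.init
  extEq : ∀ {r s}, R r s → restrictV r T1.E = restrictV s T2.E
  updR : ∀ {r s} (u : Valn Var Data), R r s → dom u = T1.E → R (updV r u) (updV s u)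
  commR : ∀ {r s}, R r s → T2.Comm s → T1.Comm r
  stepR : ∀ {r s b a r'}, R r s → T1.Tr b r a r' →
      (∃ s', T2.Tr b s a s' ∧ R r' s') ∨ (a = Act.tau ∧ R r' s)

/-- T1 ≼ T2 : some timed step simulation from T1 to T2 exists. -/
def simLE (T1 T2 : PreTTSB Var Data BCh CCh) : Prop :=
  ∃ R, IsTimedStepSim T1 T2 R

/-! ### Timed automata -/

/-- Edge labels of timed automata (actions without time passage). -/
inductive ELab (BCh CCh : Type) : Type where
  | bsend : BCh → ELab BCh CCh
  | brecv : BCh → ELab BCh CCh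
  | send : CCh → ELab BCh CCh
  | recv : CCh → ELab BCh CCh
  | tau : ELab BCh CCh

/-- Edge labels as actions. -/
def ELab.toAct : ELab BCh CCh → Act BCh CCh
  | .bsend δ => .bsend δ
  | .brecv δ => .brecv δ
  | .send c => .send c
  | .recv c => .recv c
  | .tau => .tau

/-- A timed automaton: locations (a set of data values), committed locations, initial
location, external/internal variables, initial valuation, invariants, transitions
(location, guard, action, update function, location) and urgent transitions. -/
structure TA (Var Data BCh CCh : Type) : Type where
  L : Set Data
  K : Set Data
  l0 : Data
  E : Set Var
  H : Set Var
  v0 : Valn Var Data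
  Inv : Data → Set (Valn Var Data)
  Tr : Data → Set (Valn Var Data) → ELab BCh CCh →
      (Valn Var Data → Valn Var Data) → Data → Prop
  UTr : Data → Set (Valn Var Data) → ELab BCh CCh →
      (Valn Var Data → Valn Var Data) → Data → Prop

/-- The variables of a timed automaton. -/
def TA.V (A : TA Var Data BCh CCh) : Set Var := A.E ∪ A.H

/-- Well-formedness of a timed automaton, together with Axioms VII–XI of the paper
(clock set X). -/
structure TAok (X : Set Var) (A : TA Var Data BCh CCh) : Prop where
  disjEH : Disjoint A.E A.H
  l0mem : A.l0 ∈ A.L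
  Ksub : A.K ⊆ A.L
  v0dom : dom A.v0 = A.V
  v0inv : restrictV A.v0 A.V ∈ A.Inv A.l0
  invLC : ∀ l, leftClosed X (A.Inv l)
  urgSub : ∀ {l g a ρ l'}, A.UTr l g a ρ l' → A.Tr l g a ρ l'
  trLoc : ∀ {l g a ρ l'}, A.Tr l g a ρ l' → l ∈ A.L ∧ l' ∈ A.L
  updDom : ∀ {l g a ρ l'}, A.Tr l g a ρ l' → ∀ v, dom v = A.V → dom (ρ v) = A.V
  axVII : ∀ l, indep A.V A.E (A.Inv l)
  axVIIIc : ∀ {l g ρ l'} (c : CCh), A.Tr l g (ELab.recv c) ρ l' → indep A.V A.E g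
  axVIIIb : ∀ {l g ρ l'} (δ : BCh), A.Tr l g (ELab.brecv δ) ρ l' → indep A.V A.E g
  axIX : ∀ {l}, l ∈ A.K → ∀ v, dom v = A.V → v ∈ A.Inv l →
      ∃ g a ρ l', A.Tr l g a ρ l' ∧ v ∈ g ∧ ρ v ∈ A.Inv l'
  axX : ∀ {l g a ρ l'}, A.UTr l g a ρ l' → a = ELab.tau ∧ indep A.V (A.V ∩ X) g
  axXI : ∀ {l g ρ l'} (δ : BCh), A.Tr l g (ELab.brecv δ) ρ l' →
      ∀ v, restrictV (ρ v) A.E = restrictV v A.E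

/-- States of the TTSB associated to a TA with location variable ℓ. -/
def taState (A : TA Var Data BCh CCh) (ℓ : Var) : Set (Valn Var Data) :=
  {v | dom v = A.V ∪ {ℓ} ∧
    ∃ l ∈ A.L, v ℓ = some (Sum.inr l) ∧ restrictV v A.V ∈ A.Inv l}

/-- Application of an update function ρ : Val(V) → Val(V) to a larger state. -/
def applyU (A : TA Var Data BCh CCh) (ρ : Valn Var Data → Valn Var Data)
    (s : Valn Var Data) : Valn Var Data :=
  updV s (ρ (restrictV s A.V))

/-- The transition relations of the TTSB associated to a TA
(rules ACT, TIME and VIRT of the paper). -/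
inductive TATrans (X : Set Var) (A : TA Var Data BCh CCh) (ℓ : Var) :
    Bool → Valn Var Data → Act BCh CCh → Valn Var Data → Prop where
  | act {s : Valn Var Data} {l : Data} {g : Set (Valn Var Data)} {a : ELab BCh CCh}
      {ρ : Valn Var Data → Valn Var Data} {l' : Data} {b : Bool}
      (hs : s ∈ taState A ℓ) (hl : s ℓ = some (Sum.inr l))
      (ht : A.Tr l g a ρ l') (hg : restrictV s A.V ∈ g)
      (hb : b = true ↔ l ∈ A.K)
      (hs' : updV (applyU A ρ s) (single ℓ (Sum.inr l')) ∈ taState A ℓ) :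
      TATrans X A ℓ b s a.toAct (updV (applyU A ρ s) (single ℓ (Sum.inr l')))
  | time {s : Valn Var Data} {l : Data} {d : NNReal}
      (hs : s ∈ taState A ℓ) (hl : s ℓ = some (Sum.inr l)) (hK : l ∉ A.K)
      (hs' : oplus X s d ∈ taState A ℓ)
      (hurg : ∀ d' : NNReal, d' ≤ d → ∀ g ρ l', A.UTr l g ELab.tau ρ l' →
          restrictV (oplus X s d') A.V ∉ g) :
      TATrans X A ℓ false s (Act.delay d) (oplus X s d)
  | virt {s : Valn Var Data} {l : Data} (δ : BCh)
      (hs : s ∈ taState A ℓ) (hl : s ℓ = some (Sum.inr l))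
      (hno : ∀ g ρ l', A.Tr l g (ELab.brecv δ) ρ l' → restrictV s A.V ∉ g) :
      TATrans X A ℓ false s (Act.brecv δ) s

/-- The TTSB associated to a timed automaton. -/
def TTSBof (X : Set Var) (A : TA Var Data BCh CCh) (ℓ : Var) :
    PreTTSB Var Data BCh CCh where
  E := A.E
  H := A.H ∪ {ℓ}
  S := taState A ℓ
  init := override A.v0 (single ℓ (Sum.inr A.l0))
  Tr := TATrans X A ℓ

/-! ### Networks of timed automata and their non-compositional semantics -/

/-- A network component: a timed automaton together with its (fresh) location variable. -/
abbrev Comp (Var Data BCh CCh : Type) : Type := TA Var Data BCh CCh × Var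

/-- The variables of a component, including its location variable. -/
def compW (c : Comp Var Data BCh CCh) : Set Var := c.1.V ∪ {c.2}

/-- The TTSB associated to a component. -/
def TTSBofC (X : Set Var) (c : Comp Var Data BCh CCh) : PreTTSB Var Data BCh CCh :=
  TTSBof X c.1 c.2

/-- All variables of a network. -/
def NTAvars (N : List (Comp Var Data BCh CCh)) : Set Var :=
  {x | ∃ c ∈ N, x ∈ compW c}

/-- The states of the non-compositional (UPPAAL) semantics of a network. -/
def NTAstates (N : List (Comp Var Data BCh CCh)) : Set (Valn Var Data) :=
  {v | dom v = NTAvars N ∧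
    ∀ c ∈ N, ∃ l ∈ c.1.L, v c.2 = some (Sum.inr l) ∧ restrictV v c.1.V ∈ c.1.Inv l}

/-- The initial state of the non-compositional semantics of a network. -/
def NTAinit (N : List (Comp Var Data BCh CCh)) : Valn Var Data :=
  N.foldr (fun c w => override (override c.1.v0 (single c.2 (Sum.inr c.1.l0))) w)
    (fun _ => none)

/-- A component is in a committed location at state s. -/
def atCommitted (c : Comp Var Data BCh CCh) (s : Valn Var Data) : Prop :=
  ∃ l ∈ c.1.K, s c.2 = some (Sum.inr l)

/-- No component of the network is in a committed location. -/
def noneCommitted (N : List (Comp Var Data BCh CCh)) (s : Valn Var Data) : Prop :=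
  ∀ c ∈ N, ¬ atCommitted c s

/-- Application of a component update function to a network state. -/
def applyC (c : Comp Var Data BCh CCh) (ρ : Valn Var Data → Valn Var Data)
    (s : Valn Var Data) : Valn Var Data :=
  updV s (ρ (restrictV s c.1.V))

/-- j ∈ RS(δ, i, s): component j (≠ i) has an executable δ?-transition in s. -/
def RSmem (N : List (Comp Var Data BCh CCh)) (δ : BCh) (i : ℕ) (s : Valn Var Data)
    (j : ℕ) : Prop :=
  j ≠ i ∧ ∃ (hj : j < N.length), ∃ l g ρ l',
    s (N.get ⟨j, hj⟩).2 = some (Sum.inr l) ∧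
    (N.get ⟨j, hj⟩).1.Tr l g (ELab.brecv δ) ρ l' ∧
    restrictV s (N.get ⟨j, hj⟩).1.V ∈ g

/-- Apply the chosen receiver updates in index order (left-to-right). -/
def bcastUpds (N : List (Comp Var Data BCh CCh)) (δ : BCh) (i : ℕ) (s0 : Valn Var Data)
    (ρs : ℕ → Valn Var Data → Valn Var Data) (v : Valn Var Data) : Valn Var Data :=
  (List.range N.length).foldl
    (fun w j =>
      if hj : j < N.length then
        if RSmem N δ i s0 j then applyC (N.get ⟨j, hj⟩) (ρs j) w else w
      else w) v

/-- Update the location variables of all receivers. -/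
def bcastLocs (N : List (Comp Var Data BCh CCh)) (δ : BCh) (i : ℕ) (s0 : Valn Var Data)
    (ls' : ℕ → Data) (v : Valn Var Data) : Valn Var Data :=
  (List.range N.length).foldl
    (fun w j =>
      if hj : j < N.length then
        if RSmem N δ i s0 j then
          updV w (single (N.get ⟨j, hj⟩).2 (Sum.inr (ls' j)))
        else w
      else w) v

/-- The non-compositional (UPPAAL) transition relation of a network
(rules TAU, SYNC, TIME and BCST of the paper). -/
inductive NTATr (X : Set Var) (N : List (Comp Var Data BCh CCh)) :
    Valn Var Data → Act BCh CCh → Valn Var Data → Prop where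
  | tau {s : Valn Var Data} {i : ℕ} (hi : i < N.length)
      {l : Data} {g : Set (Valn Var Data)} {ρ : Valn Var Data → Valn Var Data} {l' : Data}
      (hs : s ∈ NTAstates N)
      (hl : s (N.get ⟨i, hi⟩).2 = some (Sum.inr l))
      (ht : (N.get ⟨i, hi⟩).1.Tr l g ELab.tau ρ l')
      (hg : restrictV s (N.get ⟨i, hi⟩).1.V ∈ g)
      (hcomm : noneCommitted N s ∨ l ∈ (N.get ⟨i, hi⟩).1.K)
      (hs' : updV (applyC (N.get ⟨i, hi⟩) ρ s)
          (single (N.get ⟨i, hi⟩).2 (Sum.inr l')) ∈ NTAstates N) :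
      NTATr X N s Act.tau
        (updV (applyC (N.get ⟨i, hi⟩) ρ s) (single (N.get ⟨i, hi⟩).2 (Sum.inr l')))
  | sync {s : Valn Var Data} {i j : ℕ} (hi : i < N.length) (hj : j < N.length)
      (hij : i ≠ j) {li lj li' lj' : Data} {gi gj : Set (Valn Var Data)}
      {ρi ρj : Valn Var Data → Valn Var Data} {c : CCh}
      (hs : s ∈ NTAstates N)
      (hli : s (N.get ⟨i, hi⟩).2 = some (Sum.inr li))
      (hlj : s (N.get ⟨j, hj⟩).2 = some (Sum.inr lj))
      (hti : (N.get ⟨i, hi⟩).1.Tr li gi (ELab.send c) ρi li')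
      (htj : (N.get ⟨j, hj⟩).1.Tr lj gj (ELab.recv c) ρj lj')
      (hgi : restrictV s (N.get ⟨i, hi⟩).1.V ∈ gi)
      (hgj : restrictV s (N.get ⟨j, hj⟩).1.V ∈ gj)
      (hcomm : noneCommitted N s ∨ li ∈ (N.get ⟨i, hi⟩).1.K ∨ lj ∈ (N.get ⟨j, hj⟩).1.K)
      (hs' : updV (updV (applyC (N.get ⟨j, hj⟩) ρj (applyC (N.get ⟨i, hi⟩) ρi s))
          (single (N.get ⟨i, hi⟩).2 (Sum.inr li')))
          (single (N.get ⟨j, hj⟩).2 (Sum.inr lj')) ∈ NTAstates N) :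
      NTATr X N s Act.tau
        (updV (updV (applyC (N.get ⟨j, hj⟩) ρj (applyC (N.get ⟨i, hi⟩) ρi s))
          (single (N.get ⟨i, hi⟩).2 (Sum.inr li')))
          (single (N.get ⟨j, hj⟩).2 (Sum.inr lj')))
  | time {s : Valn Var Data} {d : NNReal}
      (hs : s ∈ NTAstates N) (hs' : oplus X s d ∈ NTAstates N)
      (hK : noneCommitted N s)
      (hurg : ¬ ∃ (i : ℕ) (hi : i < N.length), ∃ l g ρ l',
          (N.get ⟨i, hi⟩).1.UTr l g ELab.tau ρ l' ∧
          s (N.get ⟨i, hi⟩).2 = some (Sum.inr l) ∧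
          restrictV s (N.get ⟨i, hi⟩).1.V ∈ g) :
      NTATr X N s (Act.delay d) (oplus X s d)
  | bcst {s : Valn Var Data} {i : ℕ} (hi : i < N.length)
      {l l' : Data} {g : Set (Valn Var Data)} {ρ : Valn Var Data → Valn Var Data}
      {δ : BCh} (ρs : ℕ → Valn Var Data → Valn Var Data) (ls' : ℕ → Data)
      (hs : s ∈ NTAstates N)
      (hl : s (N.get ⟨i, hi⟩).2 = some (Sum.inr l))
      (ht : (N.get ⟨i, hi⟩).1.Tr l g (ELab.bsend δ) ρ l')
      (hg : restrictV s (N.get ⟨i, hi⟩).1.V ∈ g)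
      (hrecv : ∀ j (hj : j < N.length), RSmem N δ i s j →
          ∃ lj gj, s (N.get ⟨j, hj⟩).2 = some (Sum.inr lj) ∧
            (N.get ⟨j, hj⟩).1.Tr lj gj (ELab.brecv δ) (ρs j) (ls' j) ∧
            restrictV s (N.get ⟨j, hj⟩).1.V ∈ gj)
      (hcomm : noneCommitted N s ∨ l ∈ (N.get ⟨i, hi⟩).1.K ∨
          ∃ j, ∃ (hj : j < N.length), RSmem N δ i s j ∧
            ∃ lj ∈ (N.get ⟨j, hj⟩).1.K, s (N.get ⟨j, hj⟩).2 = some (Sum.inr lj))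
      (hs' : bcastLocs N δ i s ls'
          (updV (bcastUpds N δ i s ρs (applyC (N.get ⟨i, hi⟩) ρ s))
            (single (N.get ⟨i, hi⟩).2 (Sum.inr l'))) ∈ NTAstates N) :
      NTATr X N s Act.tau
        (bcastLocs N δ i s ls'
          (updV (bcastUpds N δ i s ρs (applyC (N.get ⟨i, hi⟩) ρ s))
            (single (N.get ⟨i, hi⟩).2 (Sum.inr l'))))

/-- Well-formedness of a network: components satisfy Axioms VII–XI, are pairwise
compatible, and the location variables are fresh and pairwise distinct. -/
def NTAok (X : Set Var) (N : List (Comp Var Data BCh CCh)) : Prop :=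
  (∀ c ∈ N, TAok X c.1) ∧
  N.Pairwise (fun c c' => c.1.H ∩ c'.1.V = ∅ ∧ c'.1.H ∩ c.1.V = ∅ ∧
    compatV c.1.v0 c'.1.v0) ∧
  (∀ c ∈ N, ∀ c' ∈ N, c.2 ∉ c'.1.V) ∧
  N.Pairwise (fun c c' => c.2 ≠ c'.2)

/-- Reachability in the non-compositional semantics of a network. -/
def Reach (X : Set Var) (N : List (Comp Var Data BCh CCh)) (s : Valn Var Data) : Prop :=
  Relation.ReflTransGen (fun u v => ∃ a, NTATr X N u a v) (NTAinit N) s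

/-!
A state of a composite is an override `r ‖ s` of compatible component states, and override
is associative, so both bracketings have the same states. A step of `(T₁ ‖ T₂) ‖ T₃` is
inverted rule by rule, first for the outer and then for the inner composition, and rebuilt
as a step of `T₁ ‖ (T₂ ‖ T₃)`. The rebuilt step is well formed because variables shared by
compatible components are external: an update by one component is therefore an admissible
input for another (Axioms II and III), and a broadcast receiver keeps its external variables
(Axiom VI), so it stays compatible with the others and may be dropped from the updates they
read. Every rule has a mirror image, so rotating the components gives the converse.
-/

section Valuation

variable {α β : Type*} {f g h u : α → Option β} {W : Set α} {x : α}

theorem override_apply : override f g x = if x ∈ dom f then f x else g x := rfl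

theorem updV_apply :
    updV f u x = if x ∈ dom f then (if x ∈ dom u then u x else f x) else none := by
  by_cases hf : x ∈ dom f <;> by_cases hu : x ∈ dom u <;>
    simp [updV, restrictV, override, hf, hu]

theorem notMem_dom : x ∉ dom f ↔ f x = none := by simp [dom]

theorem dom_override : dom (override f g) = dom f ∪ dom g := by
  ext x
  by_cases hf : x ∈ dom f <;> simp_all [override, dom]

theorem dom_restrictV : dom (restrictV f W) = W ∩ dom f := by
  ext x
  by_cases hx : x ∈ W <;> simp [restrictV, dom, hx]

theorem dom_updV : dom (updV f u) = dom f := by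
  ext x
  by_cases hf : x ∈ dom f <;> by_cases hu : x ∈ dom u <;> simp_all [updV_apply, dom]

theorem compatV.symm (hfg : compatV f g) : compatV g f :=
  fun x hx => (hfg x ⟨hx.2, hx.1⟩).symm

theorem compatV.override_comm (hfg : compatV f g) : override f g = override g f := by
  funext x
  by_cases hf : x ∈ dom f <;> by_cases hg : x ∈ dom g <;> simp_all [override, notMem_dom]
  exact hfg x ⟨hf, hg⟩

theorem override_assoc : override (override f g) h = override f (override g h) := by
  funext x
  by_cases hf : x ∈ dom f <;> simp [override, dom_override, hf]

theorem compatV.override_left (hfh : compatV f h) (hgh : compatV g h) :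
    compatV (override f g) h := by
  rintro x ⟨hx, hxh⟩
  rw [override_apply]
  split_ifs with hf
  · exact hfh x ⟨hf, hxh⟩
  · exact hgh x ⟨(dom_override ▸ hx).resolve_left hf, hxh⟩

theorem compatV.override_right (hfg : compatV f g) (hfh : compatV f h) :
    compatV f (override g h) :=
  (hfg.symm.override_left hfh.symm).symm

theorem compatV.of_override (hfgh : compatV (override f g) h) (hfg : compatV f g) :
    compatV f h ∧ compatV g h := by
  refine ⟨fun x hx => ?_, fun x hx => ?_⟩
  · simpa [override_apply, hx.1] using hfgh x ⟨dom_override ▸ Or.inl hx.1, hx.2⟩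
  · have := hfgh x ⟨dom_override ▸ Or.inr hx.1, hx.2⟩
    rw [override_apply] at this
    split_ifs at this with hf
    · rw [← this, hfg x ⟨hf, hx.1⟩]
    · exact this

theorem compatV.updV (hfg : compatV f g) : compatV (updV f u) (updV g u) := by
  rintro x ⟨hf, hg⟩
  rw [dom_updV] at hf hg
  simp only [updV_apply, if_pos hf, if_pos hg]
  split_ifs
  · rfl
  · exact hfg x ⟨hf, hg⟩

theorem updV_override : updV (override f g) u = override (updV f u) (updV g u) := by
  funext x
  by_cases hf : x ∈ dom f <;> by_cases hg : x ∈ dom g <;> by_cases hu : x ∈ dom u <;>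
    simp [override_apply, updV_apply, dom_override, dom_updV, hf, hg, hu]

theorem override_updV_self : override (updV g u) u = override u g := by
  funext x
  by_cases hg : x ∈ dom g <;> by_cases hu : x ∈ dom u <;>
    simp_all [override_apply, updV_apply, dom_updV, notMem_dom]

theorem updV_override_of_agree (hg : ∀ x ∈ dom f, x ∈ dom g → x ∉ dom u → g x = f x) :
    updV f (override u g) = updV f u := by
  funext x
  by_cases hf : x ∈ dom f <;> by_cases hu : x ∈ dom u <;> by_cases hx : x ∈ dom g <;>
    simp [updV_apply, override_apply, dom_override, hf, hu, hx]
  exact hg x hf hx hu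

theorem updV_override_of_compatV (hgf : compatV g f) : updV f (override u g) = updV f u :=
  updV_override_of_agree fun x hx hg _ => hgf x ⟨hg, hx⟩

/- Axioms II and III only speak of updates whose domain is exactly the set of external
variables; the next two lemmas bring other updates into that form. -/
theorem exists_updV_eq (hW : W ⊆ dom f) (hu : dom f ∩ dom u ⊆ W) :
    ∃ u', dom u' = W ∧ updV f u' = updV f u := by
  refine ⟨override (restrictV u W) (restrictV f W), ?_, ?_⟩
  · rw [dom_override, dom_restrictV, dom_restrictV, ← Set.inter_union_distrib_left,
      Set.inter_eq_left.mpr (hW.trans Set.subset_union_right)]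
  · funext x
    by_cases hf : x ∈ dom f <;> by_cases hux : x ∈ dom u <;> by_cases hx : x ∈ W <;>
      simp [updV_apply, override_apply, restrictV, dom_override, dom_restrictV, hf, hux, hx]
    exact absurd (hu ⟨hf, hux⟩) hx

theorem exists_updV_updV_eq_self (hW : W ⊆ dom f) (hu : dom f ∩ dom u ⊆ W) :
    ∃ u', dom u' = W ∧ updV (updV f u) u' = f := by
  refine ⟨restrictV f W, by rw [dom_restrictV, Set.inter_eq_left.mpr hW], ?_⟩
  funext x
  by_cases hf : x ∈ dom f <;> by_cases hux : x ∈ dom u <;> by_cases hx : x ∈ W <;>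
    simp [updV_apply, restrictV, dom_updV, dom_restrictV, hf, hux, hx]
  all_goals first | exact absurd (hu ⟨hf, hux⟩) hx | exact (notMem_dom.mp hf).symm

theorem restrictV_override_dom_left : restrictV (override f g) (dom f) = f := by
  funext x
  by_cases hf : x ∈ dom f <;> simp_all [restrictV, override_apply, notMem_dom]

theorem compatV.restrictV_override_dom_right (hfg : compatV f g) :
    restrictV (override f g) (dom g) = g := by
  rw [hfg.override_comm, restrictV_override_dom_left]

theorem override_inj {f' g' : α → Option β} (hfg : compatV f g) (hfg' : compatV f' g')
    (hf : dom f = dom f') (hg : dom g = dom g') (heq : override f g = override f' g') :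
    f = f' ∧ g = g' := by
  constructor
  · rw [← restrictV_override_dom_left (f := f) (g := g), heq, hf, restrictV_override_dom_left]
  · rw [← hfg.restrictV_override_dom_right, heq, hg, hfg'.restrictV_override_dom_right]

end Valuation

section Oplus

variable {Var Data : Type} {X : Set Var} {f g : Valn Var Data} {d : NNReal}

theorem dom_oplus : dom (oplus X f d) = dom f := by
  ext x
  by_cases hx : x ∈ X <;> simp [oplus, dom, hx]

theorem oplus_override : oplus X (override f g) d = override (oplus X f d) (oplus X g d) := by
  funext x
  by_cases hx : x ∈ X <;> simp only [oplus, override_apply, dom_oplus, hx, if_true, if_false]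
  split_ifs <;> rfl

end Oplus

section TTSB

variable {Var Data BCh CCh : Type} {X : Set Var} {T T1 T2 : PreTTSB Var Data BCh CCh}
  {r s t u v w : Valn Var Data} {x : Var}

theorem Compatible.symm (h : Compatible T1 T2) : Compatible T2 T1 :=
  ⟨h.2.1, h.1, h.2.2.symm⟩

theorem Compatible.inter_V_subset (h : Compatible T1 T2) : T1.V ∩ T2.V ⊆ T1.E ∩ T2.E := by
  have hH1 := Set.eq_empty_iff_forall_notMem.mp h.1
  have hH2 := Set.eq_empty_iff_forall_notMem.mp h.2.1
  rintro x ⟨hx1 | hx1, hx2 | hx2⟩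
  · exact ⟨hx1, hx2⟩
  · exact absurd ⟨hx2, Or.inl hx1⟩ (hH2 x)
  · exact absurd ⟨hx1, Or.inl hx2⟩ (hH1 x)
  · exact absurd ⟨hx1, Or.inr hx2⟩ (hH1 x)

theorem Compatible.mem_E (h : Compatible T1 T2) (h1 : IsTTSB X T1) (h2 : IsTTSB X T2)
    (hr : r ∈ T1.S) (hs : s ∈ T2.S) (hx : x ∈ dom r ∩ dom s) : x ∈ T1.E ∩ T2.E := by
  rw [h1.statesDom r hr, h2.statesDom s hs] at hx
  exact h.inter_V_subset hx

theorem IsTTSB.dom_eq (h : IsTTSB X T) (hs : s ∈ T.S) (ht : t ∈ T.S) : dom s = dom t := by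
  rw [h.statesDom s hs, h.statesDom t ht]

theorem IsTTSB.E_subset_dom (h : IsTTSB X T) (hs : s ∈ T.S) : T.E ⊆ dom s := by
  rw [h.statesDom s hs]
  exact Set.subset_union_left

theorem IsTTSB.updV_mem (h : IsTTSB X T) (hs : s ∈ T.S) (hu : dom s ∩ dom u ⊆ T.E) :
    updV s u ∈ T.S := by
  obtain ⟨u', hu', heq⟩ := exists_updV_eq (h.E_subset_dom hs) hu
  exact heq ▸ h.axII u' hs hu'

theorem Compatible.updV_mem (h12 : Compatible T1 T2) (h1 : IsTTSB X T1) (h2 : IsTTSB X T2)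
    (hr : r ∈ T1.S) (hs : s ∈ T2.S) : updV r s ∈ T1.S :=
  h1.updV_mem hr fun _ hx => (h12.mem_E h1 h2 hr hs hx).1

theorem IsTTSB.comm_of_recv_updV (h : IsTTSB X T) (hs : s ∈ T.S) (hu : dom s ∩ dom u ⊆ T.E)
    {c : CCh} (htr : T.Tr true (updV s u) (Act.recv c) v) : T.Comm s := by
  obtain ⟨u', hu', heq⟩ := exists_updV_updV_eq_self (h.E_subset_dom hs) hu
  obtain ⟨w, hw⟩ := h.axIIIc u' c hu' htr
  exact ⟨_, w, heq ▸ hw⟩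

theorem IsTTSB.comm_of_brecv_updV (h : IsTTSB X T) (hs : s ∈ T.S) (hu : dom s ∩ dom u ⊆ T.E)
    {δ : BCh} (htr : T.Tr true (updV s u) (Act.brecv δ) v) : T.Comm s := by
  obtain ⟨u', hu', heq⟩ := exists_updV_updV_eq_self (h.E_subset_dom hs) hu
  obtain ⟨w, hw⟩ := h.axIIIb u' δ hu' htr
  exact ⟨_, w, heq ▸ hw⟩

theorem IsTTSB.brecv_apply (h : IsTTSB X T) {b : Bool} {δ : BCh}
    (htr : T.Tr b v (Act.brecv δ) w) (hx : x ∈ T.E) : w x = v x := by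
  simpa [restrictV, hx] using (congrFun (h.axVI δ htr) x).symm

theorem Compatible.compatV_brecv (h12 : Compatible T1 T2) (h1 : IsTTSB X T1)
    (h2 : IsTTSB X T2) {b b' : Bool} {δ : BCh} {r' s' : Valn Var Data} (hrs : compatV r s)
    (hr : T1.Tr b r (Act.brecv δ) r') (hs : T2.Tr b' s (Act.brecv δ) s') : compatV r' s' := by
  rintro x ⟨hxr, hxs⟩
  have hr' := (h1.trMem hr).2
  have hs' := (h2.trMem hs).2
  have hxE := h12.mem_E h1 h2 hr' hs' ⟨hxr, hxs⟩
  rw [h1.brecv_apply hr hxE.1, h2.brecv_apply hs hxE.2]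
  exact hrs x ⟨h1.dom_eq hr' (h1.trMem hr).1 ▸ hxr, h2.dom_eq hs' (h2.trMem hs).1 ▸ hxs⟩

theorem IsTTSB.not_comm_delay (h : IsTTSB X T) {d : NNReal} :
    ¬ T.Tr true s (Act.delay d) t := fun htr => by
  rcases h.axI htr htr with hsync | ⟨heq, _⟩
  · exact hsync
  · cases heq

theorem IsTTSB.brecv_updV_apply (h : IsTTSB X T) {b : Bool} {δ : BCh}
    (htr : T.Tr b (updV s u) (Act.brecv δ) w) (hx : x ∈ dom s) (hxE : x ∈ T.E)
    (hxu : x ∉ dom u) : w x = s x := by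
  rw [h.brecv_apply htr hxE, updV_apply, if_pos hx, if_neg hxu]

theorem updV_override_of_brecv (h12 : Compatible T1 T2) (h1 : IsTTSB X T1) (h2 : IsTTSB X T2)
    (hr : r ∈ T1.S) (hs : s ∈ T2.S) (hrs : compatV r s) {b : Bool} {δ : BCh}
    (htr : T2.Tr b (updV s u) (Act.brecv δ) w) : updV r (override u w) = updV r u := by
  refine updV_override_of_agree fun x hxr hxw hxu => ?_
  have hxs : x ∈ dom s := h2.dom_eq (h2.trMem htr).2 hs ▸ hxw
  rw [h2.brecv_updV_apply htr hxs (h12.mem_E h1 h2 hr hs ⟨hxr, hxs⟩).2 hxu]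
  exact (hrs x ⟨hxr, hxs⟩).symm

end TTSB

section Par

variable {Var Data BCh CCh : Type} {X : Set Var} {T1 T2 T3 : PreTTSB Var Data BCh CCh}
  {r s r₀ s₀ v w : Valn Var Data} {b : Bool} {a : Act BCh CCh}

theorem mem_par (hr : r ∈ T1.S) (hs : s ∈ T2.S) (hrs : compatV r s) :
    override r s ∈ (par T1 T2).S :=
  ⟨r, hr, s, hs, hrs, rfl⟩

theorem par_V : (par T1 T2).V = T1.V ∪ T2.V :=
  Set.union_union_union_comm _ _ _ _

theorem Compatible.par_left (h13 : Compatible T1 T3) (h23 : Compatible T2 T3) :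
    Compatible (par T1 T2) T3 :=
  ⟨by rw [par, Set.union_inter_distrib_right, h13.1, h23.1, Set.union_empty],
    by rw [par_V, Set.inter_union_distrib_left, h13.2.1, h23.2.1, Set.union_empty],
    h13.2.2.override_left h23.2.2⟩

theorem Compatible.par_right (h12 : Compatible T1 T2) (h13 : Compatible T1 T3) :
    Compatible T1 (par T2 T3) :=
  (h12.symm.par_left h13.symm).symm

theorem par_S_assoc : (par (par T1 T2) T3).S = (par T1 (par T2 T3)).S := by
  ext v
  constructor
  · rintro ⟨_, ⟨r, hr, s, hs, hrs, rfl⟩, t, ht, hc, rfl⟩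
    obtain ⟨hrt, hst⟩ := hc.of_override hrs
    exact ⟨r, hr, _, mem_par hs ht hst, hrs.override_right hrt, override_assoc⟩
  · rintro ⟨r, hr, _, ⟨s, hs, t, ht, hst, rfl⟩, hc, rfl⟩
    obtain ⟨hsr, htr⟩ := hc.symm.of_override hst
    exact ⟨_, mem_par hr hs hsr.symm, t, ht, htr.symm.override_left hst, override_assoc.symm⟩

theorem ParTr.swap (h : ParTr T1 T2 b v a w) : ParTr T2 T1 b v a w := by
  cases h with
  | ext₁ hr hs hc ha ht => exact hc.override_comm ▸ .ext₂ hs hr hc.symm ha ht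
  | ext₂ hr hs hc ha ht => exact hc.override_comm ▸ .ext₁ hs hr hc.symm ha ht
  | tau₁ hr hs hc ht hcm => exact hc.override_comm ▸ .tau₂ hs hr hc.symm ht hcm
  | tau₂ hr hs hc ht hcm => exact hc.override_comm ▸ .tau₁ hs hr hc.symm ht hcm
  | sync₁ hr hs hc ht1 ht2 hcm => exact hc.override_comm ▸ .sync₂ hs hr hc.symm ht1 ht2 hcm
  | sync₂ hr hs hc ht1 ht2 hcm => exact hc.override_comm ▸ .sync₁ hs hr hc.symm ht1 ht2 hcm
  | time₁ hr hs hc ht1 ht2 => exact hc.override_comm ▸ .time₂ hs hr hc.symm ht1 ht2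
  | time₂ hr hs hc ht1 ht2 => exact hc.override_comm ▸ .time₁ hs hr hc.symm ht1 ht2
  | snd₁ hr hs hc ht1 ht2 => exact hc.override_comm ▸ .snd₂ hs hr hc.symm ht1 ht2
  | snd₂ hr hs hc ht1 ht2 => exact hc.override_comm ▸ .snd₁ hs hr hc.symm ht1 ht2
  | rcv₁ hr hs hc ht1 ht2 => exact hc.override_comm ▸ .rcv₂ hs hr hc.symm ht1 ht2
  | rcv₂ hr hs hc ht1 ht2 => exact hc.override_comm ▸ .rcv₁ hs hr hc.symm ht1 ht2

theorem override_inj_of_dom (h1 : IsTTSB X T1) (h2 : IsTTSB X T2) (hr₀ : r₀ ∈ T1.S)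
    (hs₀ : s₀ ∈ T2.S) (hr : dom r = T1.V) (hs : dom s = T2.V) (hrs₀ : compatV r₀ s₀)
    (hrs : compatV r s) (heq : override r s = override r₀ s₀) : r₀ = r ∧ s₀ = s :=
  override_inj hrs₀ hrs (by rw [hr, h1.statesDom r₀ hr₀]) (by rw [hs, h2.statesDom s₀ hs₀])
    heq.symm

end Par

section Comm

variable {Var Data BCh CCh : Type} {X : Set Var} {T1 T2 : PreTTSB Var Data BCh CCh}
  {r s v w : Valn Var Data} {a : Act BCh CCh}

theorem ParTr.exists_comm (h1 : IsTTSB X T1) (h2 : IsTTSB X T2) (h12 : Compatible T1 T2)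
    (htr : ParTr T1 T2 true v a w) :
    ∃ r ∈ T1.S, ∃ s ∈ T2.S, compatV r s ∧ v = override r s ∧ (T1.Comm r ∨ T2.Comm s) := by
  have sub₁ {r s} (hr : r ∈ T1.S) (hs : s ∈ T2.S) : dom r ∩ dom s ⊆ T1.E :=
    fun _ hx => (h12.mem_E h1 h2 hr hs hx).1
  have sub₂ {r s} (hr : r ∈ T1.S) (hs : s ∈ T2.S) : dom s ∩ dom r ⊆ T2.E :=
    fun _ hx => (h12.mem_E h1 h2 hr hs ⟨hx.2, hx.1⟩).2
  generalize hb : true = b at htr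
  cases htr with
  | ext₁ hr hs hc _ ht | tau₁ hr hs hc ht _ =>
    exact ⟨_, hr, _, hs, hc, rfl, .inl ⟨_, _, hb ▸ ht⟩⟩
  | ext₂ hr hs hc _ ht | tau₂ hr hs hc ht _ =>
    exact ⟨_, hr, _, hs, hc, rfl, .inr ⟨_, _, hb ▸ ht⟩⟩
  | time₁ | time₂ => cases hb
  | sync₁ hr hs hc ht1 ht2 | snd₁ hr hs hc ht1 ht2 | rcv₁ hr hs hc ht1 ht2 =>
    refine ⟨_, hr, _, hs, hc, rfl, ?_⟩
    rcases Bool.or_eq_true_iff.mp hb.symm with hb | hb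
    · exact .inl ⟨_, _, hb ▸ ht1⟩
    · right
      first
        | exact h2.comm_of_recv_updV hs (sub₂ (h1.trMem ht1).2 hs) (hb ▸ ht2)
        | exact h2.comm_of_brecv_updV hs (sub₂ (h1.trMem ht1).2 hs) (hb ▸ ht2)
        | exact ⟨_, _, hb ▸ ht2⟩
  | sync₂ hr hs hc ht1 ht2 | snd₂ hr hs hc ht1 ht2 | rcv₂ hr hs hc ht1 ht2 =>
    refine ⟨_, hr, _, hs, hc, rfl, ?_⟩
    rcases Bool.or_eq_true_iff.mp hb.symm with hb | hb
    · exact .inr ⟨_, _, hb ▸ ht1⟩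
    · left
      first
        | exact h1.comm_of_recv_updV hr (sub₁ hr (h2.trMem ht1).2) (hb ▸ ht2)
        | exact h1.comm_of_brecv_updV hr (sub₁ hr (h2.trMem ht1).2) (hb ▸ ht2)
        | exact ⟨_, _, hb ▸ ht2⟩

theorem comm_par_of_comm_left (h1 : IsTTSB X T1) (h2 : IsTTSB X T2) (h12 : Compatible T1 T2)
    (hr : r ∈ T1.S) (hs : s ∈ T2.S) (hrs : compatV r s) (hc : T1.Comm r) :
    (par T1 T2).Comm (override r s) := by
  obtain ⟨a, r', htr⟩ := hc
  cases a with
  | bsend δ =>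
    obtain ⟨b', s', hs'⟩ := h2.axV δ _ (h12.symm.updV_mem h2 h1 hs (h1.trMem htr).2)
    exact ⟨_, _, .snd₁ hr hs hrs htr hs'⟩
  | brecv δ =>
    obtain ⟨b', s', hs'⟩ := h2.axV δ s hs
    exact ⟨_, _, .rcv₁ hr hs hrs htr hs'⟩
  | send c => exact ⟨_, _, .ext₁ hr hs hrs (by trivial) htr⟩
  | recv c => exact ⟨_, _, .ext₁ hr hs hrs (by trivial) htr⟩
  | tau => exact ⟨_, _, .tau₁ hr hs hrs htr fun _ => rfl⟩
  | delay d => exact absurd htr h1.not_comm_delay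

theorem comm_par_iff (h1 : IsTTSB X T1) (h2 : IsTTSB X T2) (h12 : Compatible T1 T2)
    (hr : r ∈ T1.S) (hs : s ∈ T2.S) (hrs : compatV r s) :
    (par T1 T2).Comm (override r s) ↔ T1.Comm r ∨ T2.Comm s := by
  constructor
  · rintro ⟨a, w, htr⟩
    obtain ⟨r₀, hr₀, s₀, hs₀, hrs₀, heq, hc⟩ := htr.exists_comm h1 h2 h12
    obtain ⟨rfl, rfl⟩ := override_inj_of_dom h1 h2 hr₀ hs₀ (h1.statesDom r hr)
      (h2.statesDom s hs) hrs₀ hrs heq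
    exact hc
  · rintro (hc | hc)
    · exact comm_par_of_comm_left h1 h2 h12 hr hs hrs hc
    · obtain ⟨a, w, htr⟩ := comm_par_of_comm_left h2 h1 h12.symm hs hr hrs.symm hc
      rw [hrs.override_comm]
      exact ⟨a, w, htr.swap⟩

end Comm

section Inversion

variable {Var Data BCh CCh : Type} {X : Set Var} {T1 T2 : PreTTSB Var Data BCh CCh}
  {r s w : Valn Var Data} {b : Bool} {a : Act BCh CCh}

theorem ParTr.binary_inv (h1 : IsTTSB X T1) (h2 : IsTTSB X T2) (hr : dom r = T1.V)
    (hs : dom s = T2.V) (hrs : compatV r s) (ha : a.isBinary)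
    (htr : ParTr T1 T2 b (override r s) a w) :
    (∃ r', T1.Tr b r a r' ∧ w = override r' s) ∨ (∃ s', T2.Tr b s a s' ∧ w = override s' r) := by
  generalize hv : override r s = v at htr
  cases htr with
  | ext₁ hr₀ hs₀ hc₀ _ ht =>
    obtain ⟨rfl, rfl⟩ := override_inj_of_dom h1 h2 hr₀ hs₀ hr hs hc₀ hrs hv
    exact .inl ⟨_, ht, rfl⟩
  | ext₂ hr₀ hs₀ hc₀ _ ht =>
    obtain ⟨rfl, rfl⟩ := override_inj_of_dom h1 h2 hr₀ hs₀ hr hs hc₀ hrs hv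
    exact .inr ⟨_, ht, rfl⟩
  | _ => nomatch ha

theorem ParTr.brecv_inv (h1 : IsTTSB X T1) (h2 : IsTTSB X T2) (h12 : Compatible T1 T2)
    (hr : dom r = T1.V) (hs : dom s = T2.V) (hrs : compatV r s) {δ : BCh}
    (htr : ParTr T1 T2 b (override r s) (Act.brecv δ) w) :
    ∃ b₁ b₂ r' s', T1.Tr b₁ r (Act.brecv δ) r' ∧ T2.Tr b₂ s (Act.brecv δ) s' ∧
      compatV r' s' ∧ b = (b₁ || b₂) ∧ w = override r' s' := by
  generalize hv : override r s = v at htr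
  cases htr with
  | rcv₁ hr₀ hs₀ hc₀ ht1 ht2 =>
    obtain ⟨rfl, rfl⟩ := override_inj_of_dom h1 h2 hr₀ hs₀ hr hs hc₀ hrs hv
    exact ⟨_, _, _, _, ht1, ht2, h12.compatV_brecv h1 h2 hrs ht1 ht2, rfl, rfl⟩
  | rcv₂ hr₀ hs₀ hc₀ ht1 ht2 =>
    obtain ⟨rfl, rfl⟩ := override_inj_of_dom h1 h2 hr₀ hs₀ hr hs hc₀ hrs hv
    have hc' := h12.compatV_brecv h1 h2 hrs ht2 ht1
    exact ⟨_, _, _, _, ht2, ht1, hc', Bool.or_comm _ _, hc'.override_comm.symm⟩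
  | ext₁ _ _ _ ha _ | ext₂ _ _ _ ha _ => nomatch ha

theorem ParTr.delay_inv (h1 : IsTTSB X T1) (h2 : IsTTSB X T2) (hr : dom r = T1.V)
    (hs : dom s = T2.V) (hrs : compatV r s) {d : NNReal}
    (htr : ParTr T1 T2 b (override r s) (Act.delay d) w) :
    b = false ∧ T1.Tr false r (Act.delay d) (oplus X r d) ∧
      T2.Tr false s (Act.delay d) (oplus X s d) ∧ w = oplus X (override r s) d := by
  generalize hv : override r s = v at htr
  cases htr with
  | time₁ hr₀ hs₀ hc₀ ht1 ht2 =>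
    obtain ⟨rfl, rfl⟩ := override_inj_of_dom h1 h2 hr₀ hs₀ hr hs hc₀ hrs hv
    rw [h1.axIV ht1, h2.axIV ht2] at *
    exact ⟨rfl, ht1, ht2, oplus_override.symm⟩
  | time₂ hr₀ hs₀ hc₀ ht1 ht2 =>
    obtain ⟨rfl, rfl⟩ := override_inj_of_dom h1 h2 hr₀ hs₀ hr hs hc₀ hrs hv
    rw [h1.axIV ht2, h2.axIV ht1] at *
    exact ⟨rfl, ht2, ht1, by rw [hrs.override_comm, oplus_override]⟩
  | ext₁ _ _ _ ha _ | ext₂ _ _ _ ha _ => nomatch ha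

end Inversion

section Assoc

variable {Var Data BCh CCh : Type} {X : Set Var} {T1 T2 T3 : PreTTSB Var Data BCh CCh}
  {v v' t t' : Valn Var Data} {b b' : Bool} {a : Act BCh CCh} {c : CCh} {δ : BCh}

theorem exists_of_mem_par (hv : v ∈ (par T1 T2).S) (hc : compatV v t) :
    ∃ r ∈ T1.S, ∃ s ∈ T2.S, compatV r s ∧ compatV r t ∧ compatV s t ∧ v = override r s := by
  obtain ⟨r, hr, s, hs, hrs, rfl⟩ := hv
  exact ⟨r, hr, s, hs, hrs, (hc.of_override hrs).1, (hc.of_override hrs).2, rfl⟩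

theorem parTr_assoc_of_ext₁ (h1 : IsTTSB X T1) (h2 : IsTTSB X T2) (hv : v ∈ (par T1 T2).S)
    (ht : t ∈ T3.S) (hc : compatV v t) (ha : a.isBinary) (hstep : ParTr T1 T2 b v a v') :
    ParTr T1 (par T2 T3) b (override v t) a (override v' t) := by
  obtain ⟨r, hr, s, hs, hrs, hrt, hst, rfl⟩ := exists_of_mem_par hv hc
  rw [override_assoc (f := r)]
  rcases hstep.binary_inv h1 h2 (h1.statesDom r hr) (h2.statesDom s hs) hrs ha with
    ⟨r', hr', rfl⟩ | ⟨s', hs', rfl⟩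
  · rw [override_assoc (f := r')]
    exact .ext₁ hr (mem_par hs ht hst) (hrs.override_right hrt) ha hr'
  · rw [override_assoc (f := s'), hrt.override_comm, ← override_assoc (f := s')]
    exact .ext₂ hr (mem_par hs ht hst) (hrs.override_right hrt) ha (.ext₁ hs ht hst ha hs')

theorem parTr_assoc_of_ext₂ (hv : v ∈ (par T1 T2).S) (ht : t ∈ T3.S) (hc : compatV v t)
    (ha : a.isBinary) (hstep : T3.Tr b t a t') :
    ParTr T1 (par T2 T3) b (override v t) a (override t' v) := by
  obtain ⟨r, hr, s, hs, hrs, hrt, hst, rfl⟩ := exists_of_mem_par hv hc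
  rw [override_assoc (f := r), hrs.override_comm, ← override_assoc (f := t')]
  exact .ext₂ hr (mem_par hs ht hst) (hrs.override_right hrt) ha (.ext₂ hs ht hst ha hstep)

theorem parTr_assoc_of_tau₁ (h1 : IsTTSB X T1) (h2 : IsTTSB X T2) (h3 : IsTTSB X T3)
    (h13 : Compatible T1 T3) (h23 : Compatible T2 T3) (ht : t ∈ T3.S) (hc : compatV v t)
    (hstep : ParTr T1 T2 b v Act.tau v') (hcm : T3.Comm t → b = true) :
    ParTr T1 (par T2 T3) b (override v t) Act.tau (override v' t) := by
  cases hstep with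
  | @tau₁ r s r' _ hr hs hrs hr' hcm₁ =>
    obtain ⟨hrt, hst⟩ := hc.of_override hrs
    rw [override_assoc (f := r), override_assoc (f := r')]
    refine .tau₁ hr (mem_par hs ht hst) (hrs.override_right hrt) hr' ?_
    rw [comm_par_iff h2 h3 h23 hs ht hst]
    exact fun h => h.elim hcm₁ hcm
  | @tau₂ r s s' _ hr hs hrs hs' hcm₁ =>
    obtain ⟨hrt, hst⟩ := hc.of_override hrs
    rw [override_assoc (f := r), override_assoc (f := s'), hrt.override_comm,
      ← override_assoc (f := s')]
    exact .tau₂ hr (mem_par hs ht hst) (hrs.override_right hrt) (.tau₁ hs ht hst hs' hcm) hcm₁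
  | @sync₁ r s r' s' _ _ _ hr hs hrs hr' hs' hcm₁ =>
    obtain ⟨hrt, hst⟩ := hc.of_override hrs
    have step := ParTr.ext₁ (h2.trMem hs').1 (h13.symm.updV_mem h3 h1 ht (h1.trMem hr').2)
      hst.updV (by trivial) hs'
    rw [← updV_override] at step
    rw [override_assoc (f := r), show override (override s' r') t =
        override (override s' (updV t r')) r' by
      rw [override_assoc, override_assoc, override_updV_self]]
    refine .sync₁ hr (mem_par hs ht hst) (hrs.override_right hrt) hr' step ?_
    rw [comm_par_iff h2 h3 h23 hs ht hst]
    rintro (h | h | h)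
    exacts [hcm₁ (.inl h), hcm₁ (.inr h), hcm h]
  | @sync₂ r s r' s' _ _ _ hr hs hrs hs' hr' hcm₁ =>
    obtain ⟨hrt, hst⟩ := hc.of_override hrs
    have hr'' := (updV_override_of_compatV hrt.symm).symm ▸ hr'
    rw [override_assoc (f := r), override_assoc (f := r')]
    refine .sync₂ hr (mem_par hs ht hst) (hrs.override_right hrt)
      (.ext₁ hs ht hst (by trivial) hs') hr'' ?_
    rw [comm_par_iff h2 h3 h23 hs ht hst]
    rintro ((h | h) | h)
    exacts [hcm₁ (.inl h), hcm h, hcm₁ (.inr h)]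
  | ext₁ _ _ _ ha _ | ext₂ _ _ _ ha _ => nomatch ha

theorem parTr_assoc_of_tau₂ (h1 : IsTTSB X T1) (h2 : IsTTSB X T2) (h12 : Compatible T1 T2)
    (hv : v ∈ (par T1 T2).S) (ht : t ∈ T3.S) (hc : compatV v t)
    (hstep : T3.Tr b t Act.tau t') (hcm : (par T1 T2).Comm v → b = true) :
    ParTr T1 (par T2 T3) b (override v t) Act.tau (override t' v) := by
  obtain ⟨r, hr, s, hs, hrs, hrt, hst, rfl⟩ := exists_of_mem_par hv hc
  rw [comm_par_iff h1 h2 h12 hr hs hrs] at hcm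
  rw [override_assoc (f := r), hrs.override_comm, ← override_assoc (f := t')]
  exact .tau₂ hr (mem_par hs ht hst) (hrs.override_right hrt)
    (.tau₂ hs ht hst hstep fun h => hcm (.inr h)) fun h => hcm (.inl h)

theorem parTr_assoc_of_sync₁ (h1 : IsTTSB X T1) (h2 : IsTTSB X T2) (h3 : IsTTSB X T3)
    (h12 : Compatible T1 T2) (h23 : Compatible T2 T3) (hv : v ∈ (par T1 T2).S)
    (ht : t ∈ T3.S) (hc : compatV v t) (hstep : ParTr T1 T2 b v (Act.send c) v')
    (ht' : T3.Tr b' (updV t v') (Act.recv c) t')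
    (hcm : (par T1 T2).Comm v ∨ T3.Comm t → (b || b') = true) :
    ParTr T1 (par T2 T3) (b || b') (override v t) Act.tau (override t' v') := by
  obtain ⟨r, hr, s, hs, hrs, hrt, hst, rfl⟩ := exists_of_mem_par hv hc
  rw [comm_par_iff h1 h2 h12 hr hs hrs] at hcm
  rw [override_assoc (f := r)]
  rcases hstep.binary_inv h1 h2 (h1.statesDom r hr) (h2.statesDom s hs) hrs (by trivial) with
    ⟨r', hr', rfl⟩ | ⟨s', hs', rfl⟩
  · have ht'' := (updV_override_of_compatV hst) ▸ ht'
    have step := ParTr.ext₂ (h12.symm.updV_mem h2 h1 hs (h1.trMem hr').2) (h3.trMem ht'').1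
      hst.updV (by trivial) ht''
    rw [← updV_override] at step
    rw [show override t' (override r' s) = override (override t' (updV s r')) r' by
      rw [override_assoc, override_updV_self]]
    refine .sync₁ hr (mem_par hs ht hst) (hrs.override_right hrt) hr' step ?_
    rw [comm_par_iff h2 h3 h23 hs ht hst]
    exact fun h => hcm (by tauto)
  · have ht'' := (updV_override_of_compatV hrt) ▸ ht'
    rw [← override_assoc (f := t')]
    exact .tau₂ hr (mem_par hs ht hst) (hrs.override_right hrt)
      (.sync₁ hs ht hst hs' ht'' fun h => hcm (by tauto)) fun h => hcm (by tauto)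

theorem parTr_assoc_of_sync₂ (h1 : IsTTSB X T1) (h2 : IsTTSB X T2) (h3 : IsTTSB X T3)
    (h12 : Compatible T1 T2) (h23 : Compatible T2 T3) (hv : v ∈ (par T1 T2).S)
    (ht : t ∈ T3.S) (hc : compatV v t) (ht' : T3.Tr b t (Act.send c) t')
    (hstep : ParTr T1 T2 b' (updV v t') (Act.recv c) v')
    (hcm : T3.Comm t ∨ (par T1 T2).Comm v → (b || b') = true) :
    ParTr T1 (par T2 T3) (b || b') (override v t) Act.tau (override v' t') := by
  obtain ⟨r, hr, s, hs, hrs, hrt, hst, rfl⟩ := exists_of_mem_par hv hc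
  rw [comm_par_iff h1 h2 h12 hr hs hrs] at hcm
  rw [updV_override] at hstep
  rw [override_assoc (f := r)]
  rcases hstep.binary_inv h1 h2 (dom_updV.trans (h1.statesDom r hr))
    (dom_updV.trans (h2.statesDom s hs)) hrs.updV (by trivial) with
    ⟨r', hr', rfl⟩ | ⟨s', hs', rfl⟩
  · have hr'' := (updV_override_of_compatV hrs.symm).symm ▸ hr'
    rw [override_assoc (f := r'), override_updV_self]
    refine .sync₂ hr (mem_par hs ht hst) (hrs.override_right hrt)
      (.ext₂ hs ht hst (by trivial) ht') hr'' ?_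
    rw [comm_par_iff h2 h3 h23 hs ht hst]
    exact fun h => hcm (by tauto)
  · rw [override_assoc (f := s'), override_updV_self, ← override_assoc (f := s')]
    exact .tau₂ hr (mem_par hs ht hst) (hrs.override_right hrt)
      (.sync₂ hs ht hst ht' hs' fun h => hcm (by tauto)) fun h => hcm (by tauto)

theorem parTr_assoc_of_time₁ (h1 : IsTTSB X T1) (h2 : IsTTSB X T2) (h3 : IsTTSB X T3)
    (hv : v ∈ (par T1 T2).S) (ht : t ∈ T3.S) (hc : compatV v t) {d : NNReal}
    (hstep : ParTr T1 T2 false v (Act.delay d) v') (ht' : T3.Tr false t (Act.delay d) t') :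
    ParTr T1 (par T2 T3) false (override v t) (Act.delay d) (override v' t') := by
  obtain ⟨r, hr, s, hs, hrs, hrt, hst, rfl⟩ := exists_of_mem_par hv hc
  obtain ⟨-, hr', hs', rfl⟩ := hstep.delay_inv h1 h2 (h1.statesDom r hr) (h2.statesDom s hs) hrs
  obtain rfl := h3.axIV ht'
  rw [← oplus_override, override_assoc, oplus_override, oplus_override]
  exact .time₁ hr (mem_par hs ht hst) (hrs.override_right hrt) hr' (.time₁ hs ht hst hs' ht')

theorem parTr_assoc_of_time₂ (h1 : IsTTSB X T1) (h2 : IsTTSB X T2) (h3 : IsTTSB X T3)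
    (hv : v ∈ (par T1 T2).S) (ht : t ∈ T3.S) (hc : compatV v t) {d : NNReal}
    (ht' : T3.Tr false t (Act.delay d) t') (hstep : ParTr T1 T2 false v (Act.delay d) v') :
    ParTr T1 (par T2 T3) false (override v t) (Act.delay d) (override t' v') := by
  obtain ⟨r, hr, s, hs, hrs, hrt, hst, rfl⟩ := exists_of_mem_par hv hc
  obtain ⟨-, hr', hs', rfl⟩ := hstep.delay_inv h1 h2 (h1.statesDom r hr) (h2.statesDom s hs) hrs
  obtain rfl := h3.axIV ht'
  rw [← oplus_override, ← hc.override_comm, override_assoc, oplus_override, oplus_override]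
  exact .time₁ hr (mem_par hs ht hst) (hrs.override_right hrt) hr' (.time₁ hs ht hst hs' ht')

theorem parTr_assoc_of_snd₁ (h1 : IsTTSB X T1) (h2 : IsTTSB X T2) (h3 : IsTTSB X T3)
    (h13 : Compatible T1 T3) (h23 : Compatible T2 T3) (ht : t ∈ T3.S) (hc : compatV v t)
    (hstep : ParTr T1 T2 b v (Act.bsend δ) v') (ht' : T3.Tr b' (updV t v') (Act.brecv δ) t') :
    ParTr T1 (par T2 T3) (b || b') (override v t) (Act.bsend δ) (override v' t') := by
  cases hstep with
  | @snd₁ r s r' s' _ _ _ hr hs hrs hr' hs' =>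
    obtain ⟨hrt, hst⟩ := hc.of_override hrs
    have ht'' := updV_override_of_brecv h23.symm h3 h2 ht hs hst.symm hs' ▸ ht'
    have step := ParTr.rcv₁ (h2.trMem hs').1 (h3.trMem ht'').1 hst.updV hs' ht''
    rw [← updV_override] at step
    rw [override_assoc (f := r), override_assoc (f := r'), Bool.or_assoc]
    exact .snd₁ hr (mem_par hs ht hst) (hrs.override_right hrt) hr' step
  | @snd₂ r s r' s' _ _ _ hr hs hrs hs' hr' =>
    obtain ⟨hrt, hst⟩ := hc.of_override hrs
    have ht'' := updV_override_of_brecv h13.symm h3 h1 ht hr hrt.symm hr' ▸ ht'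
    have hr'' := (updV_override_of_brecv h13 h1 h3 hr ht hrt ht'').symm ▸ hr'
    have hrt' := h13.compatV_brecv h1 h3 hrt.updV hr' ht''
    rw [override_assoc (f := r), override_assoc (f := s'), hrt'.override_comm,
      ← override_assoc (f := s'), Bool.or_right_comm]
    exact .snd₂ hr (mem_par hs ht hst) (hrs.override_right hrt) (.snd₁ hs ht hst hs' ht'') hr''
  | ext₁ _ _ _ ha _ | ext₂ _ _ _ ha _ => nomatch ha

theorem parTr_assoc_of_snd₂ (h1 : IsTTSB X T1) (h2 : IsTTSB X T2) (h12 : Compatible T1 T2)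
    (hv : v ∈ (par T1 T2).S) (ht : t ∈ T3.S) (hc : compatV v t)
    (ht' : T3.Tr b t (Act.bsend δ) t') (hstep : ParTr T1 T2 b' (updV v t') (Act.brecv δ) v') :
    ParTr T1 (par T2 T3) (b || b') (override v t) (Act.bsend δ) (override t' v') := by
  obtain ⟨r, hr, s, hs, hrs, hrt, hst, rfl⟩ := exists_of_mem_par hv hc
  rw [updV_override] at hstep
  obtain ⟨b₁, b₂, r', s', hr', hs', hrs', rfl, rfl⟩ := hstep.brecv_inv h1 h2 h12
    (dom_updV.trans (h1.statesDom r hr)) (dom_updV.trans (h2.statesDom s hs)) hrs.updV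
  have hr'' := (updV_override_of_brecv h12 h1 h2 hr hs hrs hs').symm ▸ hr'
  rw [override_assoc (f := r), hrs'.override_comm, ← override_assoc (f := t'), ← Bool.or_assoc,
    Bool.or_right_comm]
  exact .snd₂ hr (mem_par hs ht hst) (hrs.override_right hrt) (.snd₂ hs ht hst ht' hs') hr''

theorem parTr_assoc_of_rcv₁ (h1 : IsTTSB X T1) (h2 : IsTTSB X T2) (h12 : Compatible T1 T2)
    (hv : v ∈ (par T1 T2).S) (ht : t ∈ T3.S) (hc : compatV v t)
    (hstep : ParTr T1 T2 b v (Act.brecv δ) v') (ht' : T3.Tr b' t (Act.brecv δ) t') :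
    ParTr T1 (par T2 T3) (b || b') (override v t) (Act.brecv δ) (override v' t') := by
  obtain ⟨r, hr, s, hs, hrs, hrt, hst, rfl⟩ := exists_of_mem_par hv hc
  obtain ⟨b₁, b₂, r', s', hr', hs', -, rfl, rfl⟩ :=
    hstep.brecv_inv h1 h2 h12 (h1.statesDom r hr) (h2.statesDom s hs) hrs
  rw [override_assoc (f := r), override_assoc (f := r'), Bool.or_assoc]
  exact .rcv₁ hr (mem_par hs ht hst) (hrs.override_right hrt) hr' (.rcv₁ hs ht hst hs' ht')

theorem parTr_assoc_of_rcv₂ (h1 : IsTTSB X T1) (h2 : IsTTSB X T2) (h12 : Compatible T1 T2)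
    (hv : v ∈ (par T1 T2).S) (ht : t ∈ T3.S) (hc : compatV v t)
    (ht' : T3.Tr b t (Act.brecv δ) t') (hstep : ParTr T1 T2 b' v (Act.brecv δ) v') :
    ParTr T1 (par T2 T3) (b || b') (override v t) (Act.brecv δ) (override t' v') := by
  obtain ⟨r, hr, s, hs, hrs, hrt, hst, rfl⟩ := exists_of_mem_par hv hc
  obtain ⟨b₁, b₂, r', s', hr', hs', hrs', rfl, rfl⟩ :=
    hstep.brecv_inv h1 h2 h12 (h1.statesDom r hr) (h2.statesDom s hs) hrs
  rw [override_assoc (f := r), hrs'.override_comm, ← override_assoc (f := t'), ← Bool.or_assoc,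
    Bool.or_right_comm]
  exact .rcv₂ hr (mem_par hs ht hst) (hrs.override_right hrt) (.rcv₂ hs ht hst ht' hs') hr'

theorem ParTr.assoc (h1 : IsTTSB X T1) (h2 : IsTTSB X T2) (h3 : IsTTSB X T3)
    (h12 : Compatible T1 T2) (h13 : Compatible T1 T3) (h23 : Compatible T2 T3)
    (h : ParTr (par T1 T2) T3 b v a w) : ParTr T1 (par T2 T3) b v a w := by
  cases h with
  | ext₁ hv ht hc ha hstep => exact parTr_assoc_of_ext₁ h1 h2 hv ht hc ha hstep
  | ext₂ hv ht hc ha hstep => exact parTr_assoc_of_ext₂ hv ht hc ha hstep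
  | tau₁ _ ht hc hstep hcm => exact parTr_assoc_of_tau₁ h1 h2 h3 h13 h23 ht hc hstep hcm
  | tau₂ hv ht hc hstep hcm => exact parTr_assoc_of_tau₂ h1 h2 h12 hv ht hc hstep hcm
  | sync₁ hv ht hc hstep ht' hcm =>
    exact parTr_assoc_of_sync₁ h1 h2 h3 h12 h23 hv ht hc hstep ht' hcm
  | sync₂ hv ht hc ht' hstep hcm =>
    exact parTr_assoc_of_sync₂ h1 h2 h3 h12 h23 hv ht hc ht' hstep hcm
  | time₁ hv ht hc hstep ht' => exact parTr_assoc_of_time₁ h1 h2 h3 hv ht hc hstep ht'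
  | time₂ hv ht hc ht' hstep => exact parTr_assoc_of_time₂ h1 h2 h3 hv ht hc ht' hstep
  | snd₁ _ ht hc hstep ht' => exact parTr_assoc_of_snd₁ h1 h2 h3 h13 h23 ht hc hstep ht'
  | snd₂ hv ht hc ht' hstep => exact parTr_assoc_of_snd₂ h1 h2 h12 hv ht hc ht' hstep
  | rcv₁ hv ht hc hstep ht' => exact parTr_assoc_of_rcv₁ h1 h2 h12 hv ht hc hstep ht'
  | rcv₂ hv ht hc ht' hstep => exact parTr_assoc_of_rcv₂ h1 h2 h12 hv ht hc ht' hstep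

theorem parTr_assoc (h1 : IsTTSB X T1) (h2 : IsTTSB X T2) (h3 : IsTTSB X T3)
    (h12 : Compatible T1 T2) (h13 : Compatible T1 T3) (h23 : Compatible T2 T3) :
    ParTr (par T1 T2) T3 = ParTr T1 (par T2 T3) := by
  funext b v a w
  refine propext ⟨ParTr.assoc h1 h2 h3 h12 h13 h23, fun h => ?_⟩
  -- rotate the components: `ParTr` is symmetric, so the forward inclusion applies twice more
  exact ((h.swap.assoc h2 h3 h1 h23 h12.symm h13.symm).swap.assoc h3 h1 h2 h13.symm h23.symm
    h12).swap

end Assoc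

attribute [ext] PreTTSB

/-- Theorem 1 (Associativity): parallel composition of TTSBs is associative on
pairwise compatible TTSBs, and the intermediate compositions are compatible. -/
theorem par_assoc (X : Set Var) (T1 T2 T3 : PreTTSB Var Data BCh CCh)
    (h1 : IsTTSB X T1) (h2 : IsTTSB X T2) (h3 : IsTTSB X T3)
    (h12 : Compatible T1 T2) (h13 : Compatible T1 T3) (h23 : Compatible T2 T3) :
    Compatible (par T1 T2) T3 ∧ Compatible T1 (par T2 T3) ∧
      par (par T1 T2) T3 = par T1 (par T2 T3) :=
  ⟨h13.par_left h23, h12.par_right h13,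
    PreTTSB.ext (Set.union_assoc _ _ _) (Set.union_assoc _ _ _) par_S_assoc override_assoc
      (parTr_assoc h1 h2 h3 h12 h13 h23)⟩

end TTSBpaper
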